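/- Let Q(z) = det(f(z)) be a holomorphic function on a disc with an isolated zero of multiplicity m ≥ 1 at z = 0, arising from a holomorphic matrix-valued function f : Δ → M_k(ℂ). Then there exist matrices f_t arbitrarily close to f (in the uniform norm on a smaller disc) such that det(f_t(z)) has only simple zeros near 0. -/

import Mathlib

/-!
Induct on the size of the matrix. Replace the minor of `f` obtained by deleting the first row and
column by a nearby family `B` whose determinant `C` has only simple zeros, and call the new matrix
`F`; then `det (F + t E₀₀) = Q + t C` with `Q = det F`. At a double zero `z` of `Q + t C` the
Wronskian `W = Q C' - Q' C` vanishes, and `z` determines `t`. If `W ≢ 0` it has finitely many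
zeros on a compact set, so only finitely many `t` are bad; if `W ≡ 0` then `Q = c C`, and
`Q + t C = (c + t) C` has only simple zeros unless `t = -c`. Any small good `t` does the job.
-/

open Metric Matrix Filter Topology Set

namespace Matrix

theorem det_add_single {n R : Type*} [Fintype n] [DecidableEq n] [CommRing R]
    (A : Matrix n n R) (i j : n) (t : R) :
    (A + single i j t).det = A.det + t * adjugate A j i := by
  have : A + single i j t = A.updateRow i (A i + t • Pi.single j 1) := by
    ext a b
    by_cases ha : a = i <;> by_cases hb : b = j <;> simp [ha, hb, Ne.symm, updateRow_apply]
  rw [this, det_updateRow_add, updateRow_eq_self, det_updateRow_smul, adjugate_apply]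

theorem det_add_single_zero_zero {n : ℕ} {R : Type*} [CommRing R]
    (A : Matrix (Fin (n + 1)) (Fin (n + 1)) R) (t : R) :
    (A + single 0 0 t).det = A.det + t * (A.submatrix Fin.succ Fin.succ).det := by
  simp [det_add_single, adjugate_fin_succ_eq_det_submatrix]

def updateSubmatrixSucc {n : ℕ} {α : Type*} (A : Matrix (Fin (n + 1)) (Fin (n + 1)) α)
    (B : Matrix (Fin n) (Fin n) α) : Matrix (Fin (n + 1)) (Fin (n + 1)) α :=
  of fun i j => Fin.cases (A 0 j) (fun i => Fin.cases (A i.succ 0) (B i) j) i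

section updateSubmatrixSucc

variable {n : ℕ} {α : Type*} (A : Matrix (Fin (n + 1)) (Fin (n + 1)) α)
  (B : Matrix (Fin n) (Fin n) α)

@[simp] theorem updateSubmatrixSucc_zero (j : Fin (n + 1)) : A.updateSubmatrixSucc B 0 j = A 0 j :=
  rfl

@[simp] theorem updateSubmatrixSucc_succ_zero (i : Fin n) :
    A.updateSubmatrixSucc B i.succ 0 = A i.succ 0 :=
  rfl

@[simp] theorem updateSubmatrixSucc_succ_succ (i j : Fin n) :
    A.updateSubmatrixSucc B i.succ j.succ = B i j :=
  rfl

@[simp] theorem submatrix_succ_updateSubmatrixSucc :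
    (A.updateSubmatrixSucc B).submatrix Fin.succ Fin.succ = B :=
  rfl

end updateSubmatrixSucc

end Matrix

theorem DifferentiableOn.matrix_det {𝕜 n : Type*} [NontriviallyNormedField 𝕜] [Fintype n]
    [DecidableEq n] {s : Set 𝕜} {f : 𝕜 → Matrix n n 𝕜}
    (hf : ∀ i j, DifferentiableOn 𝕜 (fun z => f z i j) s) :
    DifferentiableOn 𝕜 (fun z => (f z).det) s := by
  simp only [det_apply]
  exact .fun_sum fun σ _ => (DifferentiableOn.fun_finsetProd fun i _ => hf (σ i) i).const_smul _

section SimpleZeros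

variable {𝕜 : Type*} [NontriviallyNormedField 𝕜]

def HasOnlySimpleZerosOn (F : 𝕜 → 𝕜) (s : Set 𝕜) : Prop :=
  ∀ z ∈ s, F z = 0 → deriv F z ≠ 0

theorem HasOnlySimpleZerosOn.exists_ne_zero {F : 𝕜 → 𝕜} {s U : Set 𝕜}
    (hF : HasOnlySimpleZerosOn F s) (hU : IsOpen U) (hsU : s ⊆ U) (hs : s.Nonempty) :
    ∃ z ∈ U, F z ≠ 0 := by
  by_contra! hzero
  obtain ⟨z, hz⟩ := hs
  have hF0 : F =ᶠ[𝓝 z] fun _ => 0 := eventually_of_mem (hU.mem_nhds (hsU hz)) hzero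
  exact hF z hz (hzero z (hsU hz)) (by simp [hF0.deriv_eq])

theorem HasOnlySimpleZerosOn.add_mul_of_eqOn_const_mul {Q C : 𝕜 → 𝕜} {s U : Set 𝕜} {c t : 𝕜}
    (hCs : HasOnlySimpleZerosOn C s) (hU : IsOpen U) (hsU : s ⊆ U)
    (hC : DifferentiableOn 𝕜 C U) (hQ : EqOn Q (fun z => c * C z) U) (ht : c + t ≠ 0) :
    HasOnlySimpleZerosOn (fun z => Q z + t * C z) s := by
  intro z hz hval
  have hnhds : U ∈ 𝓝 z := hU.mem_nhds (hsU hz)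
  have heq : (fun w => Q w + t * C w) =ᶠ[𝓝 z] fun w => (c + t) * C w :=
    eventuallyEq_of_mem hnhds fun w hw => by rw [hQ hw, add_mul]
  have hCz : C z = 0 := (mul_eq_zero.mp (heq.eq_of_nhds.symm.trans hval)).resolve_left ht
  rw [heq.deriv_eq, deriv_const_mul _ (hC.differentiableAt hnhds)]
  exact mul_ne_zero ht (hCs z hz hCz)

end SimpleZeros

theorem exists_eqOn_const_mul_of_wronskian_eq_zero {U : Set ℂ} (hU : IsOpen U)
    (hUc : IsPreconnected U) {Q C : ℂ → ℂ} (hQ : DifferentiableOn ℂ Q U)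
    (hC : DifferentiableOn ℂ C U)
    (hW : EqOn (fun z => Q z * deriv C z - deriv Q z * C z) 0 U) (hC₀ : ∃ z₀ ∈ U, C z₀ ≠ 0) :
    ∃ c, EqOn Q (fun z => c * C z) U := by
  obtain ⟨z₀, hz₀, hCz₀⟩ := hC₀
  obtain ⟨ρ, hρ, hball⟩ := Metric.isOpen_iff.mp
    (hC.continuousOn.isOpen_inter_preimage hU isOpen_compl_singleton) z₀ ⟨hz₀, hCz₀⟩
  have hdiff : ∀ z ∈ ball z₀ ρ, DifferentiableAt ℂ Q z ∧ DifferentiableAt ℂ C z ∧ C z ≠ 0 :=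
    fun z hz => ⟨hQ.differentiableAt (hU.mem_nhds (hball hz).1),
      hC.differentiableAt (hU.mem_nhds (hball hz).1), (hball hz).2⟩
  have hquot : ∀ z ∈ ball z₀ ρ, Q z / C z = Q z₀ / C z₀ := by
    refine fun z hz => isOpen_ball.is_const_of_deriv_eq_zero (f := fun z => Q z / C z)
      (convex_ball z₀ ρ).isPreconnected
      (fun w hw => ((hdiff w hw).1.div (hdiff w hw).2.1 (hdiff w hw).2.2).differentiableWithinAt)
      (fun w hw => ?_) hz (mem_ball_self hρ)
    obtain ⟨hQw, hCw, hCw0⟩ := hdiff w hw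
    have := hW (hball hw).1
    simp only [Pi.zero_apply] at this ⊢
    rw [deriv_fun_div hQw hCw hCw0, div_eq_zero_iff]
    exact .inl (by linear_combination -this)
  refine ⟨Q z₀ / C z₀, fun z hz => ?_⟩
  have hG : AnalyticOnNhd ℂ (fun z => Q z - Q z₀ / C z₀ * C z) U :=
    (hQ.sub (hC.const_mul _)).analyticOnNhd hU
  have hG0 := hG.eqOn_zero_of_preconnected_of_eventuallyEq_zero hUc hz₀ <| by
    filter_upwards [ball_mem_nhds z₀ hρ] with w hw
    rw [← hquot w hw, Pi.zero_apply, div_mul_cancel₀ _ (hdiff w hw).2.2, sub_self]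
  simpa [sub_eq_zero] using hG0 hz

theorem HasOnlySimpleZerosOn.finite_setOf_not_add_mul {U K s : Set ℂ} (hU : IsOpen U)
    (hUc : IsPreconnected U) (hK : IsCompact K) (hsK : s ⊆ K) (hKU : K ⊆ U) (hs : s.Nonempty)
    {Q C : ℂ → ℂ} (hQ : DifferentiableOn ℂ Q U) (hC : DifferentiableOn ℂ C U)
    (hCs : HasOnlySimpleZerosOn C s) :
    {t : ℂ | ¬ HasOnlySimpleZerosOn (fun z => Q z + t * C z) s}.Finite := by
  have hsU : s ⊆ U := hsK.trans hKU
  set W : ℂ → ℂ := fun z => Q z * deriv C z - deriv Q z * C z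
  have hQa := hQ.analyticOnNhd hU
  have hCa := hC.analyticOnNhd hU
  have hWa : AnalyticOnNhd ℂ W U := (hQa.mul hCa.deriv).sub (hQa.deriv.mul hCa)
  rcases hWa.eqOn_zero_or_eventually_ne_zero_of_preconnected hUc with hW | hW
  · obtain ⟨c, hc⟩ := exists_eqOn_const_mul_of_wronskian_eq_zero hU hUc hQ hC hW
      (hCs.exists_ne_zero hU hsU hs)
    refine (finite_singleton (-c)).subset fun t ht => ?_
    by_contra hne
    exact ht (hCs.add_mul_of_eqOn_const_mul hU hsU hC hc
      (fun h => hne (eq_neg_of_add_eq_zero_right h)))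
  -- the `t` for which `Q + t C` has a double zero at `z`, if any
  set φ : ℂ → ℂ := fun z => if C z = 0 then -deriv Q z / deriv C z else -Q z / C z
  have hZ : {z ∈ s | W z = 0}.Finite :=
    (hK.finite_sdiff_of_mem_codiscreteWithin (codiscreteWithin_mono hKU hW)).subset
      fun z hz => ⟨hsK hz.1, fun h => h hz.2⟩
  refine (hZ.image φ).subset fun t ht => ?_
  simp only [HasOnlySimpleZerosOn, not_forall, not_not, mem_ofPred_eq] at ht
  obtain ⟨z, hz, hval, hder⟩ := ht
  have hQz := hQ.differentiableAt (hU.mem_nhds (hsU hz))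
  have hCz := hC.differentiableAt (hU.mem_nhds (hsU hz))
  rw [deriv_fun_add hQz (hCz.const_mul t), deriv_const_mul t hCz] at hder
  refine ⟨z, ⟨hz, by linear_combination deriv C z * hval - C z * hder⟩, ?_⟩
  by_cases hC0 : C z = 0
  · simp only [φ, hC0, if_true]
    rw [div_eq_iff (hCs z hz hC0)]
    linear_combination -hder
  · simp only [φ, hC0, if_false]
    rw [div_eq_iff hC0]
    linear_combination -hval

theorem exists_hasOnlySimpleZerosOn_det {U K s : Set ℂ} (hU : IsOpen U)
    (hUc : IsPreconnected U) (hK : IsCompact K) (hsK : s ⊆ K) (hKU : K ⊆ U) (hs : s.Nonempty)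
    (n : ℕ) (f : ℂ → Matrix (Fin n) (Fin n) ℂ)
    (hf : ∀ i j, DifferentiableOn ℂ (fun z => f z i j) U) {ε : ℝ} (hε : 0 < ε) :
    ∃ g : ℂ → Matrix (Fin n) (Fin n) ℂ, (∀ i j, DifferentiableOn ℂ (fun z => g z i j) U) ∧
      (∀ z ∈ s, ∀ i j, ‖g z i j - f z i j‖ ≤ ε) ∧ HasOnlySimpleZerosOn (fun z => (g z).det) s := by
  induction n generalizing ε with
  | zero => exact ⟨f, hf, fun _ _ i => i.elim0, fun z _ h => by simp at h⟩
  | succ n ih =>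
    obtain ⟨B, hB, hBf, hBs⟩ := ih (fun z => (f z).submatrix Fin.succ Fin.succ)
      (fun i j => hf i.succ j.succ) (half_pos hε)
    set F : ℂ → Matrix (Fin (n + 1)) (Fin (n + 1)) ℂ := fun z => (f z).updateSubmatrixSucc (B z)
    have hF : ∀ i j, DifferentiableOn ℂ (fun z => F z i j) U := by
      intro i j
      cases i using Fin.cases <;> cases j using Fin.cases <;> simp [F, hf, hB]
    have hFf : ∀ z ∈ s, ∀ i j, ‖F z i j - f z i j‖ ≤ ε / 2 := by
      intro z hz i j
      cases i using Fin.cases <;> cases j using Fin.cases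
      case succ.succ i j => exact hBf z hz i j
      all_goals simpa [F] using (half_pos hε).le
    obtain ⟨t, ht, htε⟩ := ((HasOnlySimpleZerosOn.finite_setOf_not_add_mul hU hUc hK hsK hKU hs
      (.matrix_det hF) (.matrix_det hB) hBs).countable.dense_compl ℂ).exists_mem_open
      isOpen_ball ⟨0, mem_ball_self (half_pos hε)⟩
    refine ⟨fun z => F z + single 0 0 t, fun i j => (hF i j).add_const _, fun z hz i j => ?_, ?_⟩
    · calc ‖F z i j + single 0 0 t i j - f z i j‖
          ≤ ‖F z i j - f z i j‖ + ‖single 0 0 t i j‖ := by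
            rw [add_sub_right_comm]; exact norm_add_le _ _
        _ ≤ ε / 2 + ε / 2 := by
            gcongr
            · exact hFf z hz i j
            · rw [single_apply]
              split_ifs
              · exact (mem_ball_zero_iff.mp htε).le
              · simpa using (half_pos hε).le
        _ = ε := add_halves ε
    · have hdet : (fun z => (F z + single 0 0 t).det) = fun z => (F z).det + t * (B z).det := by
        ext z
        rw [det_add_single_zero_zero, submatrix_succ_updateSubmatrixSucc]
      rw [hdet]
      exact not_not.mp ht

theorem perturb_det_to_simple_zeros_general
    (k : ℕ) (R : ℝ) (f : ℂ → Matrix (Fin k) (Fin k) ℂ)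
    (hf : ∀ i j, DifferentiableOn ℂ (fun z => f z i j) (ball (0 : ℂ) R)) :
    ∀ ε > 0, ∀ r ∈ Set.Ioo 0 R, ∃ g : ℂ → Matrix (Fin k) (Fin k) ℂ,
      (∀ i j, DifferentiableOn ℂ (fun z => g z i j) (ball (0 : ℂ) r)) ∧
      (∀ z ∈ ball (0 : ℂ) r, ∀ i j, ‖g z i j - f z i j‖ ≤ ε) ∧
      ∀ z ∈ ball (0 : ℂ) r, (g z).det = 0 →
        deriv (fun w => (g w).det) z ≠ 0 := by
  rintro ε hε r ⟨hr, hrR⟩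
  obtain ⟨g, hg, hgf, hsimple⟩ := exists_hasOnlySimpleZerosOn_det isOpen_ball
    (convex_ball 0 R).isPreconnected (isCompact_closedBall 0 r) ball_subset_closedBall
    (closedBall_subset_ball hrR) ⟨0, mem_ball_self hr⟩ k f hf hε
  exact ⟨g, fun i j => (hg i j).mono (ball_subset_ball hrR.le), hgf, hsimple⟩

/-- Perturbing a holomorphic matrix family to make the zeros of its determinant
simple.  Let `f : Δ → M_k(ℂ)` be holomorphic on the disc `ball 0 R` with
`Q(z) = det (f z)` having a zero of multiplicity `m ≥ 1` at `z = 0` (i.e.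
`Q z = z^m · h z` with `h` holomorphic, `h 0 ≠ 0`).  Then on any smaller disc
there exist holomorphic matrix families uniformly arbitrarily close to `f` whose
determinants have only simple zeros. -/
theorem perturb_det_to_simple_zeros
    (k : ℕ) (R : ℝ) (hR : 0 < R) (f : ℂ → Matrix (Fin k) (Fin k) ℂ)
    (hf : ∀ i j, DifferentiableOn ℂ (fun z => f z i j) (ball (0 : ℂ) R))
    (m : ℕ) (hm : 1 ≤ m) (h : ℂ → ℂ)
    (hh : DifferentiableOn ℂ h (ball (0 : ℂ) R)) (hh0 : h 0 ≠ 0)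
    (hQ : ∀ z ∈ ball (0 : ℂ) R, (f z).det = z ^ m * h z) :
    ∀ ε > 0, ∀ r ∈ Set.Ioo 0 R, ∃ g : ℂ → Matrix (Fin k) (Fin k) ℂ,
      (∀ i j, DifferentiableOn ℂ (fun z => g z i j) (ball (0 : ℂ) r)) ∧
      (∀ z ∈ ball (0 : ℂ) r, ∀ i j, ‖g z i j - f z i j‖ ≤ ε) ∧
      ∀ z ∈ ball (0 : ℂ) r, (g z).det = 0 →
        deriv (fun w => (g w).det) z ≠ 0 :=
  perturb_det_to_simple_zeros_general k R f hf
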